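/- Let m∈(0,1], φ(X)=|X|^{m-1}X, U⊂ℝ^n open, I₀⊂ℝ an open interval, and k∈ℝ. If u is locally bounded on I₀×U and φ(u)∈L²_loc(I₀;W^{s,2}_loc(U)), then (u−k)_+∈L²_loc(I₀;W^{s,2}_loc(U)). Quantitatively: for every open interval I and compact K with I×K⊂I₀×U, setting M = ess sup_{I×K}|u|, there is a constant C depending on m, k and M such that for a.e. t∈I, ∫_K∫_K |(u(x,t)−k)_+−(u(y,t)−k)_+|²/|x−y|^{n+2s} dx dy ≤ C ∫_K∫_K |φ(u)(x,t)−φ(u)(y,t)|²/|x−y|^{n+2s} dx dy. -/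
import Mathlib


open MeasureTheory Set Filter

noncomputable section

/-- Euclidean space ℝⁿ. -/
abbrev Rn (n : ℕ) : Type := EuclideanSpace ℝ (Fin n)

/-- The nonlinearity φ(X) = |X|^{m-1} X. -/
def phi (m X : ℝ) : ℝ := |X| ^ (m - 1) * X

/-- Positive part. -/
def posP (a : ℝ) : ℝ := max a 0

/-- Open cube of radius ρ centered at x₀. -/
def cube {n : ℕ} (x₀ : Rn n) (ρ : ℝ) : Set (Rn n) := {x | ∀ i, |x i - x₀ i| < ρ}

/-- Space-time cylinder with vertex (x₀, t₀): K_ρ(x₀) × (t₀ - τ, t₀]. -/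
def cyl {n : ℕ} (x₀ : Rn n) (t₀ ρ τ : ℝ) : Set (Rn n × ℝ) :=
  (cube x₀ ρ) ×ˢ Ioc (t₀ - τ) t₀

/-- Nonlocal tail of u over K_r(x₀) × I. -/
def tailOf {n : ℕ} (m s : ℝ) (u : Rn n × ℝ → ℝ) (x₀ : Rn n) (r : ℝ) (I : Set ℝ) : ℝ :=
  (r ^ (2 * s) *
    essSup (fun t => ∫ y in (cube x₀ r)ᶜ, |u (y, t)| ^ m / ‖y - x₀‖ ^ ((n : ℝ) + 2 * s))
      (volume.restrict I)) ^ (1 / m)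

/-- Measurable kernel with bounds λ|x-y|^{-n-2s} ≤ K(x,y;t) ≤ Λ|x-y|^{-n-2s}. -/
def KernelBounds (n : ℕ) (s lam Lam : ℝ) (Kk : Rn n → Rn n → ℝ → ℝ) : Prop :=
  (Measurable fun p : (Rn n × Rn n) × ℝ => Kk p.1.1 p.1.2 p.2) ∧
  (∀ x y t, 0 ≤ Kk x y t) ∧
  ∀ (x y : Rn n) (t : ℝ), x ≠ y →
    lam / ‖x - y‖ ^ ((n : ℝ) + 2 * s) ≤ Kk x y t ∧
      Kk x y t ≤ Lam / ‖x - y‖ ^ ((n : ℝ) + 2 * s)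

/-- The function-space memberships in the definition of local weak solutions on Ω × (ta, tb]:
φ(u) ∈ L²loc(W^{s,2}loc), the tail integrability, and the time-continuity memberships. -/
def SolSpaces (n : ℕ) (s m ta tb : ℝ) (Ω : Set (Rn n)) (u : Rn n × ℝ → ℝ) : Prop :=
  Measurable u ∧
  (∀ Kc : Set (Rn n), IsCompact Kc → Kc ⊆ Ω →
    ∀ t₁ t₂ : ℝ, ta < t₁ → t₁ ≤ t₂ → t₂ ≤ tb →
      (∫⁻ z in Kc ×ˢ Ioc t₁ t₂, ENNReal.ofReal (phi m (u z) ^ 2)) < ⊤ ∧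
      (∫⁻ t in Ioc t₁ t₂, ∫⁻ x in Kc, ∫⁻ y in Kc,
          ENNReal.ofReal ((phi m (u (x, t)) - phi m (u (y, t))) ^ 2
            / ‖x - y‖ ^ ((n : ℝ) + 2 * s))) < ⊤) ∧
  essSup (fun t => ∫⁻ y, ENNReal.ofReal (|u (y, t)| ^ m / (1 + ‖y‖) ^ ((n : ℝ) + 2 * s)))
      (volume.restrict (Ioc ta tb)) < ⊤ ∧
  (1 < m → ∀ Kc : Set (Rn n), IsCompact Kc → Kc ⊆ Ω →
    ContinuousOn (fun t => ∫ x in Kc, u (x, t) ^ 2) (Ioo ta tb) ∧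
    ∀ t₁ t₂ : ℝ, ta < t₁ → t₁ ≤ t₂ → t₂ ≤ tb →
      (∫⁻ z in Kc ×ˢ Ioc t₁ t₂, ENNReal.ofReal (u z ^ 2)) < ⊤ ∧
      (∫⁻ t in Ioc t₁ t₂, ∫⁻ x in Kc, ∫⁻ y in Kc,
          ENNReal.ofReal ((u (x, t) - u (y, t)) ^ 2 / ‖x - y‖ ^ ((n : ℝ) + 2 * s))) < ⊤) ∧
  (m < 1 → ∀ Kc : Set (Rn n), IsCompact Kc → Kc ⊆ Ω →
    ContinuousOn (fun t => ∫ x in Kc, |u (x, t)| ^ (m + 1)) (Ioo ta tb))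

/-- The weak sub-solution inequality against smooth nonnegative compactly supported
test functions, on Ω × (ta, tb]. -/
def SubSolutionIneq (n : ℕ) (m ta tb : ℝ) (Ω : Set (Rn n))
    (Kk : Rn n → Rn n → ℝ → ℝ) (u : Rn n × ℝ → ℝ) : Prop :=
  ∀ Kc : Set (Rn n), IsCompact Kc → Kc ⊆ Ω →
  ∀ t₁ t₂ : ℝ, ta < t₁ → t₁ ≤ t₂ → t₂ ≤ tb →
  ∀ ξ : Rn n × ℝ → ℝ, ContDiff ℝ (⊤ : ℕ∞) ξ → (∀ z, 0 ≤ ξ z) →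
    (∀ t : ℝ, tsupport (fun x => ξ (x, t)) ⊆ Kc) →
    ((∫ x in Kc, u (x, t₂) * ξ (x, t₂)) - (∫ x in Kc, u (x, t₁) * ξ (x, t₁)))
        - (∫ t in Ioc t₁ t₂, ∫ x in Kc, u (x, t) * deriv (fun r => ξ (x, r)) t)
        + (∫ t in Ioc t₁ t₂, ∫ x in Kc, ∫ y,
            (phi m (u (x, t)) - phi m (u (y, t))) * (ξ (x, t) - ξ (y, t)) * Kk x y t)
      ≤ 0

/-- The weak super-solution inequality. -/
def SupSolutionIneq (n : ℕ) (m ta tb : ℝ) (Ω : Set (Rn n))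
    (Kk : Rn n → Rn n → ℝ → ℝ) (u : Rn n × ℝ → ℝ) : Prop :=
  ∀ Kc : Set (Rn n), IsCompact Kc → Kc ⊆ Ω →
  ∀ t₁ t₂ : ℝ, ta < t₁ → t₁ ≤ t₂ → t₂ ≤ tb →
  ∀ ξ : Rn n × ℝ → ℝ, ContDiff ℝ (⊤ : ℕ∞) ξ → (∀ z, 0 ≤ ξ z) →
    (∀ t : ℝ, tsupport (fun x => ξ (x, t)) ⊆ Kc) →
    0 ≤ ((∫ x in Kc, u (x, t₂) * ξ (x, t₂)) - (∫ x in Kc, u (x, t₁) * ξ (x, t₁)))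
        - (∫ t in Ioc t₁ t₂, ∫ x in Kc, u (x, t) * deriv (fun r => ξ (x, r)) t)
        + (∫ t in Ioc t₁ t₂, ∫ x in Kc, ∫ y,
            (phi m (u (x, t)) - phi m (u (y, t))) * (ξ (x, t) - ξ (y, t)) * Kk x y t)

/-- Local weak sub-solution of ∂ₜu - Lφ(u) = 0 on Ω × (ta, tb]. -/
def IsLocalWeakSubSolution (n : ℕ) (s m ta tb : ℝ) (Ω : Set (Rn n))
    (Kk : Rn n → Rn n → ℝ → ℝ) (u : Rn n × ℝ → ℝ) : Prop :=
  SolSpaces n s m ta tb Ω u ∧ SubSolutionIneq n m ta tb Ω Kk u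

/-- Local weak super-solution of ∂ₜu - Lφ(u) = 0 on Ω × (ta, tb]. -/
def IsLocalWeakSupSolution (n : ℕ) (s m ta tb : ℝ) (Ω : Set (Rn n))
    (Kk : Rn n → Rn n → ℝ → ℝ) (u : Rn n × ℝ → ℝ) : Prop :=
  SolSpaces n s m ta tb Ω u ∧ SupSolutionIneq n m ta tb Ω Kk u

/-- Local weak solution: both a sub- and a super-solution. -/
def IsLocalWeakSolution (n : ℕ) (s m ta tb : ℝ) (Ω : Set (Rn n))
    (Kk : Rn n → Rn n → ℝ → ℝ) (u : Rn n × ℝ → ℝ) : Prop :=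
  SolSpaces n s m ta tb Ω u ∧ SubSolutionIneq n m ta tb Ω Kk u ∧
    SupSolutionIneq n m ta tb Ω Kk u

/-- u is locally (essentially) bounded on Ω × (ta, tb]. -/
def LocallyBoundedOn {n : ℕ} (u : Rn n × ℝ → ℝ) (Ω : Set (Rn n)) (ta tb : ℝ) : Prop :=
  ∀ Kc : Set (Rn n), IsCompact Kc → Kc ⊆ Ω → ∀ t₁ : ℝ, ta < t₁ →
    ∃ M : ℝ, ∀ᵐ z ∂(volume.restrict (Kc ×ˢ Ioc t₁ tb)), |u z| ≤ M

/-- Essential oscillation of u over a space-time set. -/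
def essOsc {n : ℕ} (u : Rn n × ℝ → ℝ) (S : Set (Rn n × ℝ)) : ℝ :=
  essSup u (volume.restrict S) - essInf u (volume.restrict S)

/-- g₊(P,Q) = ∫_Q^P (φ(r) - φ(Q))₊ dr. -/
def gPlus (m P Q : ℝ) : ℝ := ∫ r in Q..P, posP (phi m r - phi m Q)

/-- g₋(P,Q) = -∫_Q^P (φ(r) - φ(Q))₋ dr. -/
def gMinus (m P Q : ℝ) : ℝ := -∫ r in Q..P, posP (phi m Q - phi m r)

lemma posP_lip (x y : ℝ) : |posP x - posP y| ≤ |x - y| :=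
  abs_max_sub_max_le_abs x y 0

lemma phi_of_nonneg {m a : ℝ} (hm : 0 < m) (ha : 0 ≤ a) : phi m a = a ^ m := by
  rcases eq_or_lt_of_le ha with h | h
  · simp [phi, ← h, Real.zero_rpow hm.ne']
  · rw [phi, abs_of_pos h, ← Real.rpow_add_one h.ne']
    ring_nf

lemma phi_neg (m a : ℝ) : phi m (-a) = - phi m a := by
  simp only [phi, abs_neg]; ring

lemma rpow_gain {m M : ℝ} (hm0 : 0 < m) (hm1 : m ≤ 1) (hM : 0 < M)
    {a b : ℝ} (hb : 0 ≤ b) (hba : b ≤ a) (haM : a ≤ M) :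
    m * M ^ (m - 1) * (a - b) ≤ a ^ m - b ^ m := by
  set f : ℝ → ℝ := fun t => t ^ m - m * M ^ (m - 1) * t with hf
  have hmono : MonotoneOn f (Icc (0 : ℝ) M) := by
    apply monotoneOn_of_deriv_nonneg (convex_Icc 0 M)
    · apply ContinuousOn.sub
      · intro x hx
        exact (Real.continuousAt_rpow_const x m (Or.inr hm0.le)).continuousWithinAt
      · exact (continuous_const.mul continuous_id).continuousOn
    · intro x hx
      rw [interior_Icc] at hx
      exact ((Real.hasDerivAt_rpow_const (Or.inl (ne_of_gt hx.1))).sub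
        ((hasDerivAt_id x).const_mul _)).differentiableAt.differentiableWithinAt
    · intro x hx
      rw [interior_Icc] at hx
      have hder : HasDerivAt f (m * x ^ (m - 1) - m * M ^ (m - 1)) x := by
        have h1 : HasDerivAt (fun t : ℝ => t ^ m) (m * x ^ (m - 1)) x :=
          Real.hasDerivAt_rpow_const (p := m) (Or.inl (ne_of_gt hx.1))
        have h2 : HasDerivAt (fun t : ℝ => m * M ^ (m - 1) * t) (m * M ^ (m - 1)) x := by
          simpa using (hasDerivAt_id x).const_mul (m * M ^ (m - 1))
        exact h1.sub h2
      rw [hder.deriv, sub_nonneg]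
      have : M ^ (m - 1) ≤ x ^ (m - 1) :=
        Real.rpow_le_rpow_of_nonpos hx.1 hx.2.le (by linarith)
      exact mul_le_mul_of_nonneg_left this hm0.le
  have := hmono (show b ∈ Icc (0:ℝ) M from ⟨hb, hba.trans haM⟩)
    (show a ∈ Icc (0:ℝ) M from ⟨hb.trans hba, haM⟩) hba
  simp only [hf] at this
  nlinarith [this]

lemma phi_lower {m M : ℝ} (hm0 : 0 < m) (hm1 : m ≤ 1) (hM : 0 < M)
    {a b : ℝ} (ha : |a| ≤ M) (hb : |b| ≤ M) :
    m * M ^ (m - 1) * |a - b| ≤ |phi m a - phi m b| := by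
  have key : ∀ a b : ℝ, b ≤ a → |a| ≤ M → |b| ≤ M →
      m * M ^ (m - 1) * (a - b) ≤ phi m a - phi m b := by
    intro a b hba ha hb
    have haM : a ≤ M := (le_abs_self a).trans ha
    have hbM : -M ≤ b := neg_le_of_abs_le hb
    rcases le_total 0 b with hb0 | hb0
    · rw [phi_of_nonneg hm0 (hb0.trans hba), phi_of_nonneg hm0 hb0]
      exact rpow_gain hm0 hm1 hM hb0 hba haM
    · rcases le_total a 0 with ha0 | ha0
      · have h1 : (0:ℝ) ≤ -a := by linarith
        have h2 : -a ≤ -b := by linarith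
        have h3 : -b ≤ M := by linarith
        have := rpow_gain hm0 hm1 hM h1 h2 h3
        rw [← phi_of_nonneg hm0 h1, ← phi_of_nonneg hm0 (h1.trans h2),
          phi_neg, phi_neg] at this
        linarith
      · have g1 := rpow_gain hm0 hm1 hM le_rfl ha0 haM
        have g2 := rpow_gain hm0 hm1 hM le_rfl (by linarith : (0:ℝ) ≤ -b) (by linarith)
        rw [← phi_of_nonneg hm0 ha0, ← phi_of_nonneg hm0 le_rfl] at g1
        rw [← phi_of_nonneg hm0 (by linarith : (0:ℝ) ≤ -b),
          ← phi_of_nonneg hm0 le_rfl, phi_neg] at g2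
        simp only [phi, abs_zero, mul_zero, zero_mul, sub_zero] at g1 g2 ⊢
        nlinarith
  rcases le_total b a with hba | hab
  · have := key a b hba ha hb
    rw [abs_of_nonneg (by linarith : (0:ℝ) ≤ a - b)]
    exact this.trans (le_abs_self _)
  · have := key b a hab hb ha
    rw [abs_sub_comm a b, abs_sub_comm (phi m a),
      abs_of_nonneg (by linarith : (0:ℝ) ≤ b - a)]
    exact this.trans (le_abs_self _)

lemma key_sq {m M : ℝ} (k : ℝ) (hm0 : 0 < m) (hm1 : m ≤ 1) (hM : 0 < M)
    {a b : ℝ} (ha : |a| ≤ M) (hb : |b| ≤ M) :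
    (posP (a - k) - posP (b - k)) ^ 2
      ≤ ((m * M ^ (m - 1))⁻¹) ^ 2 * (phi m a - phi m b) ^ 2 := by
  set c := m * M ^ (m - 1) with hcdef
  have hc : 0 < c := mul_pos hm0 (Real.rpow_pos_of_pos hM _)
  have h1 : |posP (a - k) - posP (b - k)| ≤ |a - b| := by
    have := posP_lip (a - k) (b - k)
    have he : a - k - (b - k) = a - b := by ring
    rwa [he] at this
  have h2 := phi_lower hm0 hm1 hM ha hb
  have h4 : c * |posP (a - k) - posP (b - k)| ≤ |phi m a - phi m b| :=
    le_trans (mul_le_mul_of_nonneg_left h1 hc.le) h2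
  have h5 : (c * |posP (a - k) - posP (b - k)|) ^ 2 ≤ |phi m a - phi m b| ^ 2 :=
    pow_le_pow_left₀ (by positivity) h4 2
  have h6 : (c⁻¹) ^ 2 * (c * |posP (a - k) - posP (b - k)|) ^ 2
      = |posP (a - k) - posP (b - k)| ^ 2 := by
    rw [mul_pow, ← mul_assoc, ← mul_pow, inv_mul_cancel₀ hc.ne', one_pow, one_mul]
  calc (posP (a - k) - posP (b - k)) ^ 2
      = |posP (a - k) - posP (b - k)| ^ 2 := (sq_abs _).symm
    _ = (c⁻¹) ^ 2 * (c * |posP (a - k) - posP (b - k)|) ^ 2 := h6.symm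
    _ ≤ (c⁻¹) ^ 2 * |phi m a - phi m b| ^ 2 :=
        mul_le_mul_of_nonneg_left h5 (by positivity)
    _ = (c⁻¹) ^ 2 * (phi m a - phi m b) ^ 2 := by rw [sq_abs]

lemma ae_slice {n : ℕ} {u : Rn n × ℝ → ℝ} (hu : Measurable u)
    {Kc : Set (Rn n)} {I : Set ℝ} {M : ℝ}
    (h : ∀ᵐ z ∂(volume.restrict (Kc ×ˢ I)), |u z| ≤ M) :
    ∀ᵐ t ∂(volume.restrict I), ∀ᵐ x ∂(volume.restrict Kc), |u (x, t)| ≤ M := by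
  have h1 : ∀ᵐ z ∂((volume.restrict Kc).prod (volume.restrict I)), |u z| ≤ M := by
    rw [Measure.prod_restrict, ← Measure.volume_eq_prod]; exact h
  have h2 : ∀ᵐ z ∂((volume.restrict I).prod (volume.restrict Kc)),
      |u (z.2, z.1)| ≤ M := by
    rw [← Measure.prod_swap]
    exact (MeasureTheory.ae_map_iff measurable_swap.aemeasurable
      (measurableSet_le ((hu.comp (measurable_snd.prodMk measurable_fst)).abs)
        measurable_const)).2 h1
  exact Measure.ae_ae_of_ae_prod h2

/-- Slicewise Gagliardo comparison. -/
lemma gag_slice {n : ℕ} (m s k C M : ℝ) (hC : 0 ≤ C)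
    (hkey : ∀ a b : ℝ, |a| ≤ M → |b| ≤ M →
      (posP (a - k) - posP (b - k)) ^ 2 ≤ C * (phi m a - phi m b) ^ 2)
    (Kc : Set (Rn n)) (v : Rn n → ℝ)
    (hx : ∀ᵐ x ∂(volume.restrict Kc), |v x| ≤ M) :
    (∫⁻ x in Kc, ∫⁻ y in Kc,
        ENNReal.ofReal ((posP (v x - k) - posP (v y - k)) ^ 2
          / ‖x - y‖ ^ ((n : ℝ) + 2 * s)))
      ≤ ENNReal.ofReal C *
        ∫⁻ x in Kc, ∫⁻ y in Kc,
          ENNReal.ofReal ((phi m (v x) - phi m (v y)) ^ 2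
            / ‖x - y‖ ^ ((n : ℝ) + 2 * s)) := by
  rw [← lintegral_const_mul' _ _ ENNReal.ofReal_ne_top]
  refine lintegral_mono_ae ?_
  filter_upwards [hx] with x hxM
  rw [← lintegral_const_mul' _ _ ENNReal.ofReal_ne_top]
  refine lintegral_mono_ae ?_
  filter_upwards [hx] with y hyM
  rw [← ENNReal.ofReal_mul hC]
  apply ENNReal.ofReal_le_ofReal
  set d := ‖x - y‖ ^ ((n : ℝ) + 2 * s) with hd
  have hd0 : 0 ≤ d := Real.rpow_nonneg (norm_nonneg _) _
  rcases eq_or_lt_of_le hd0 with h0 | h0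
  · rw [← h0, div_zero, div_zero, mul_zero]
  · rw [mul_div_assoc' C _ d, div_le_div_iff₀ h0 h0]
    have := hkey (v x) (v y) hxM hyM
    nlinarith [this, h0.le, sq_nonneg (phi m (v x) - phi m (v y))]

/-- Lemma 3.7: for 0 < m ≤ 1, if u is locally bounded on I₀ × U and
φ(u) ∈ L²loc(I₀; W^{s,2}loc(U)), then (u-k)₊ ∈ L²loc(I₀; W^{s,2}loc(U)); quantitatively,
on every compact K and interval [t₁,t₂] with ess sup bound M on |u|, for a.e. time slice
the Gagliardo energy of (u-k)₊ is controlled by that of φ(u), with a constant depending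
on m, k and M. -/
theorem truncation_in_fractional_sobolev
    (n : ℕ) (hn : 2 ≤ n) (s : ℝ) (hs : s ∈ Ioo (0 : ℝ) 1)
    (m : ℝ) (hm0 : 0 < m) (hm1 : m ≤ 1)
    (U : Set (Rn n)) (hU : IsOpen U) (a b : ℝ) (hab : a < b) (k : ℝ)
    (u : Rn n × ℝ → ℝ) (hmes : Measurable u)
    (hbdd : ∀ Kc : Set (Rn n), IsCompact Kc → Kc ⊆ U →
      ∀ t₁ t₂ : ℝ, a < t₁ → t₁ ≤ t₂ → t₂ < b →
        ∃ M : ℝ, ∀ᵐ z ∂(volume.restrict (Kc ×ˢ Icc t₁ t₂)), |u z| ≤ M)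
    (hphi : ∀ Kc : Set (Rn n), IsCompact Kc → Kc ⊆ U →
      ∀ t₁ t₂ : ℝ, a < t₁ → t₁ ≤ t₂ → t₂ < b →
        (∫⁻ t in Icc t₁ t₂,
            ((∫⁻ x in Kc, ENNReal.ofReal (phi m (u (x, t)) ^ 2)) +
              ∫⁻ x in Kc, ∫⁻ y in Kc,
                ENNReal.ofReal ((phi m (u (x, t)) - phi m (u (y, t))) ^ 2
                  / ‖x - y‖ ^ ((n : ℝ) + 2 * s)))) < ⊤) :
    (∀ Kc : Set (Rn n), IsCompact Kc → Kc ⊆ U →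
      ∀ t₁ t₂ : ℝ, a < t₁ → t₁ ≤ t₂ → t₂ < b →
        (∫⁻ t in Icc t₁ t₂,
            ((∫⁻ x in Kc, ENNReal.ofReal (posP (u (x, t) - k) ^ 2)) +
              ∫⁻ x in Kc, ∫⁻ y in Kc,
                ENNReal.ofReal ((posP (u (x, t) - k) - posP (u (y, t) - k)) ^ 2
                  / ‖x - y‖ ^ ((n : ℝ) + 2 * s)))) < ⊤) ∧
    (∀ Kc : Set (Rn n), IsCompact Kc → Kc ⊆ U →
      ∀ t₁ t₂ : ℝ, a < t₁ → t₁ ≤ t₂ → t₂ < b →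
      ∀ M : ℝ, (∀ᵐ z ∂(volume.restrict (Kc ×ˢ Icc t₁ t₂)), |u z| ≤ M) →
        ∃ C > (0 : ℝ), ∀ᵐ t ∂(volume.restrict (Icc t₁ t₂)),
          (∫⁻ x in Kc, ∫⁻ y in Kc,
              ENNReal.ofReal ((posP (u (x, t) - k) - posP (u (y, t) - k)) ^ 2
                / ‖x - y‖ ^ ((n : ℝ) + 2 * s)))
            ≤ ENNReal.ofReal C *
              ∫⁻ x in Kc, ∫⁻ y in Kc,
                ENNReal.ofReal ((phi m (u (x, t)) - phi m (u (y, t))) ^ 2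
                  / ‖x - y‖ ^ ((n : ℝ) + 2 * s))) := by
  constructor
  · intro Kc hKcomp hKU t₁ t₂ ht1 ht12 ht2
    obtain ⟨M₀, hM₀⟩ := hbdd Kc hKcomp hKU t₁ t₂ ht1 ht12 ht2
    set M : ℝ := max M₀ 1 with hMdef
    have hM1 : (0:ℝ) < M := lt_of_lt_of_le one_pos (le_max_right _ _)
    have hMae : ∀ᵐ z ∂(volume.restrict (Kc ×ˢ Icc t₁ t₂)), |u z| ≤ M := by
      filter_upwards [hM₀] with z hz; exact hz.trans (le_max_left _ _)
    set C : ℝ := ((m * M ^ (m - 1))⁻¹) ^ 2 with hCdef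
    have hC0 : 0 ≤ C := sq_nonneg _
    have hkey : ∀ a' b' : ℝ, |a'| ≤ M → |b'| ≤ M →
        (posP (a' - k) - posP (b' - k)) ^ 2 ≤ C * (phi m a' - phi m b') ^ 2 :=
      fun a' b' ha' hb' => key_sq k hm0 hm1 hM1 ha' hb'
    have hslice := ae_slice hmes hMae
    have hfin := hphi Kc hKcomp hKU t₁ t₂ ht1 ht12 ht2
    set K₁ : ENNReal := ENNReal.ofReal ((M + |k|) ^ 2) * volume Kc with hK₁
    calc
      (∫⁻ t in Icc t₁ t₂,
          ((∫⁻ x in Kc, ENNReal.ofReal (posP (u (x, t) - k) ^ 2)) +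
            ∫⁻ x in Kc, ∫⁻ y in Kc,
              ENNReal.ofReal ((posP (u (x, t) - k) - posP (u (y, t) - k)) ^ 2
                / ‖x - y‖ ^ ((n : ℝ) + 2 * s))))
        ≤ ∫⁻ t in Icc t₁ t₂,
            (K₁ + ENNReal.ofReal C *
              ((∫⁻ x in Kc, ENNReal.ofReal (phi m (u (x, t)) ^ 2)) +
                ∫⁻ x in Kc, ∫⁻ y in Kc,
                  ENNReal.ofReal ((phi m (u (x, t)) - phi m (u (y, t))) ^ 2
                    / ‖x - y‖ ^ ((n : ℝ) + 2 * s)))) := by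
          refine lintegral_mono_ae ?_
          filter_upwards [hslice] with t ht
          refine add_le_add ?_ ?_
          · calc (∫⁻ x in Kc, ENNReal.ofReal (posP (u (x, t) - k) ^ 2))
                ≤ ∫⁻ _ in Kc, ENNReal.ofReal ((M + |k|) ^ 2) := by
                  refine lintegral_mono_ae ?_
                  filter_upwards [ht] with x hx
                  apply ENNReal.ofReal_le_ofReal
                  have h1 : posP (u (x, t) - k) ≤ M + |k| := by
                    have h2 : posP (u (x, t) - k) ≤ |u (x, t) - k| :=
                      max_le (le_abs_self _) (abs_nonneg _)
                    have h3 : |u (x, t) - k| ≤ |u (x, t)| + |k| := abs_sub _ _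
                    linarith
                  exact pow_le_pow_left₀ (le_max_right _ _) h1 2
              _ = K₁ := setLIntegral_const _ _
          · refine le_trans (gag_slice m s k C M hC0 hkey Kc (fun x => u (x, t)) ht) ?_
            exact mul_le_mul_right le_add_self _
      _ = K₁ * volume (Icc t₁ t₂) + ENNReal.ofReal C *
            ∫⁻ t in Icc t₁ t₂,
              ((∫⁻ x in Kc, ENNReal.ofReal (phi m (u (x, t)) ^ 2)) +
                ∫⁻ x in Kc, ∫⁻ y in Kc,
                  ENNReal.ofReal ((phi m (u (x, t)) - phi m (u (y, t))) ^ 2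
                    / ‖x - y‖ ^ ((n : ℝ) + 2 * s))) := by
          rw [lintegral_add_left measurable_const, setLIntegral_const,
            lintegral_const_mul' _ _ ENNReal.ofReal_ne_top]
      _ < ⊤ := by
          rw [ENNReal.add_lt_top]
          constructor
          · exact ENNReal.mul_lt_top
              (ENNReal.mul_lt_top ENNReal.ofReal_lt_top hKcomp.measure_lt_top)
              measure_Icc_lt_top
          · exact ENNReal.mul_lt_top ENNReal.ofReal_lt_top hfin
  · intro Kc hKcomp hKU t₁ t₂ ht1 ht12 ht2 M₀ hM₀
    set M : ℝ := max M₀ 1 with hMdef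
    have hM1 : (0:ℝ) < M := lt_of_lt_of_le one_pos (le_max_right _ _)
    have hMae : ∀ᵐ z ∂(volume.restrict (Kc ×ˢ Icc t₁ t₂)), |u z| ≤ M := by
      filter_upwards [hM₀] with z hz; exact hz.trans (le_max_left _ _)
    set C : ℝ := ((m * M ^ (m - 1))⁻¹) ^ 2 with hCdef
    have hCpos : 0 < C := by
      have : 0 < m * M ^ (m - 1) := mul_pos hm0 (Real.rpow_pos_of_pos hM1 _)
      positivity
    have hkey : ∀ a' b' : ℝ, |a'| ≤ M → |b'| ≤ M →
        (posP (a' - k) - posP (b' - k)) ^ 2 ≤ C * (phi m a' - phi m b') ^ 2 :=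
      fun a' b' ha' hb' => key_sq k hm0 hm1 hM1 ha' hb'
    refine ⟨C, hCpos, ?_⟩
    filter_upwards [ae_slice hmes hMae] with t ht
    exact gag_slice m s k C M hCpos.le hkey Kc (fun x => u (x, t)) ht
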